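/- arXiv:1611.05801 — 5 statements merged into one kernel-verified Lean document; each statement's English description precedes it below -/
import Mathlib

section
/- Let G be a locally compact Hausdorff topological group. Then the following are equivalent: (1) G is σ-compact (a countable union of compact subsets); (2) every open subgroup of G has countable index in G; (3) G has an open subgroup H of countable index in G which is almost connected (i.e. H/H° is compact, where H° is the identity component of H). -/
/-!
The identity component `G°` is a closed normal subgroup and `G ⧸ G°` is totally disconnected, so by
van Dantzig's theorem it has a compact open subgroup `K`; the preimage `H` of `K` is open in `G`, and
`H ⧸ H° ≅ K` is compact because `H° = G°`. Conversely, in an almost connected locally compact group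
the subgroup generated by a compact neighbourhood of `1` is open and σ-compact; it contains the
identity component, so it has finite index and the group is σ-compact. σ-compactness passes from a
subgroup to the whole group when the index is countable, and an open subgroup of a σ-compact group
has countable index since the coset space is discrete and Lindelöf.
-/

open Set Topology
open scoped Pointwise

theorem Submonoid.coe_closure_eq_iUnion_pow {M : Type*} [Monoid M] (s : Set M) :
    (closure s : Set M) = ⋃ n : ℕ, s ^ n := by
  refine Subset.antisymm (fun x hx ↦ ?_) (iUnion_subset fun n ↦ ?_)
  · induction hx using closure_induction with
    | mem x hx => exact mem_iUnion.2 ⟨1, by simpa using hx⟩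
    | one => exact mem_iUnion.2 ⟨0, by simp⟩
    | mul x y _ _ hx hy =>
      obtain ⟨m, hm⟩ := mem_iUnion.1 hx
      obtain ⟨n, hn⟩ := mem_iUnion.1 hy
      exact mem_iUnion.2 ⟨m + n, pow_add s m n ▸ mul_mem_mul hm hn⟩
  · induction n with
    | zero => simp [one_mem]
    | succ n ih =>
      rw [pow_succ]
      rintro _ ⟨a, ha, b, hb, rfl⟩
      exact mul_mem (ih ha) (subset_closure hb)

theorem Subgroup.coe_closure_eq_iUnion_pow {G : Type*} [Group G] (s : Set G) :
    (closure s : Set G) = ⋃ n : ℕ, (s ∪ s⁻¹) ^ n := by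
  rw [← coe_toSubmonoid, closure_toSubmonoid, Submonoid.coe_closure_eq_iUnion_pow]

theorem IsCompact.pow {M : Type*} [Monoid M] [TopologicalSpace M] [ContinuousMul M] {s : Set M}
    (hs : IsCompact s) : ∀ n : ℕ, IsCompact (s ^ n)
  | 0 => by simp
  | n + 1 => by rw [pow_succ]; exact (hs.pow n).mul hs

theorem Subgroup.closure_subset_of_mul_subset {G : Type*} [Group G] {V W : Set G} (hW : 1 ∈ W)
    (hV : W * V ⊆ W) (hVinv : W * V⁻¹ ⊆ W) : (closure V : Set G) ⊆ W := by
  suffices ∀ g ∈ closure V, ∀ w ∈ W, w * g ∈ W from fun g hg ↦ by simpa using this g hg 1 hW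
  intro g hg
  induction hg using closure_induction'' with
  | mem x hx => exact fun w hw ↦ hV (mul_mem_mul hw hx)
  | inv_mem x hx => exact fun w hw ↦ hVinv (mul_mem_mul hw (by simpa using hx))
  | one => simp
  | mul x y _ _ hx hy => exact fun w hw ↦ by simpa [mul_assoc] using hy _ (hx w hw)

theorem IsCompact.exists_isCompact_subset_image {X Y : Type*} [TopologicalSpace X]
    [TopologicalSpace Y] [WeaklyLocallyCompactSpace X] {f : X → Y} (hf : IsOpenMap f)
    {K : Set Y} (hK : IsCompact K) (hKf : K ⊆ range f) : ∃ C, IsCompact C ∧ K ⊆ f '' C := by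
  choose C hC hCx using exists_compact_mem_nhds (X := X)
  obtain ⟨t, ht⟩ := hK.elim_finite_subcover (fun x ↦ f '' interior (C x))
    (fun x ↦ hf _ isOpen_interior) fun y hy ↦ by
      obtain ⟨x, rfl⟩ := hKf hy
      exact mem_iUnion.2 ⟨x, mem_image_of_mem f (mem_interior_iff_mem_nhds.2 (hCx x))⟩
  refine ⟨⋃ x ∈ t, C x, t.isCompact_biUnion fun x _ ↦ hC x, ht.trans ?_⟩
  simp only [image_iUnion]
  exact iUnion₂_mono fun x _ ↦ image_mono interior_subset

section TopologicalGroup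

variable {G : Type*} [Group G] [TopologicalSpace G] [IsTopologicalGroup G]

theorem Subgroup.isSigmaCompact_closure {K : Set G} (hK : IsCompact K) :
    IsSigmaCompact (closure K : Set G) := by
  rw [coe_closure_eq_iUnion_pow]
  exact isSigmaCompact_iUnion_of_isCompact _ (hK.union hK.inv).pow

theorem exists_isOpen_isSigmaCompact_subgroup [WeaklyLocallyCompactSpace G] :
    ∃ H : Subgroup G, IsOpen (H : Set G) ∧ IsSigmaCompact (H : Set G) := by
  obtain ⟨K, hK, hK1⟩ := exists_compact_mem_nhds (1 : G)
  exact ⟨Subgroup.closure K,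
    Subgroup.isOpen_of_mem_nhds _ (Filter.mem_of_superset hK1 Subgroup.subset_closure),
    Subgroup.isSigmaCompact_closure hK⟩

theorem Subgroup.sigmaCompactSpace_of_countable_quotient (H : Subgroup G)
    (hH : IsSigmaCompact (H : Set G)) [Countable (G ⧸ H)] : SigmaCompactSpace G := by
  have hcover : range (Quotient.out : G ⧸ H → G) • (H : Set G) = univ := by
    refine eq_univ_of_forall fun g ↦ ?_
    obtain ⟨h, hh⟩ := QuotientGroup.mk_out_eq_mul H g
    exact ⟨_, mem_range_self (g : G ⧸ H), h⁻¹, H.inv_mem h.2, by simp [hh]⟩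
  rw [← isSigmaCompact_univ_iff, ← hcover, ← iUnion_smul_left_image]
  exact isSigmaCompact_biUnion (countable_range _) fun g _ ↦
    hH.image (continuous_const_smul g)

theorem Subgroup.countable_quotient_of_isOpen [SigmaCompactSpace G] {H : Subgroup G}
    (hH : IsOpen (H : Set G)) : Countable (G ⧸ H) :=
  have := QuotientGroup.discreteTopology hH
  have : LindelofSpace (G ⧸ H) := Quotient.lindelofSpace
  countable_of_Lindelof_of_discrete

theorem Subgroup.finite_quotient_of_isOpen_of_le {N P : Subgroup G} [CompactSpace (G ⧸ N)]
    (hP : IsOpen (P : Set G)) (hNP : N ≤ P) : Finite (G ⧸ P) :=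
  have := QuotientGroup.discreteTopology hP
  have hsurj : Function.Surjective (Subgroup.quotientMapOfLE hNP) :=
    QuotientGroup.mk_surjective.forall.2 fun g ↦ ⟨g, rfl⟩
  have : CompactSpace (G ⧸ P) := hsurj.compactSpace (continuous_id.quotient_map' _)
  finite_of_compact_of_discrete

end TopologicalGroup

section ConnectedComponent

variable {G : Type*} [Group G] [TopologicalSpace G] [IsTopologicalGroup G]

open Subgroup

instance Subgroup.connectedComponentOfOne_normal : (connectedComponentOfOne G).Normal where
  conj_mem n hn g := by
    show g * n * g⁻¹ ∈ connectedComponent (1 : G)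
    simpa using ((continuous_const_mul g).mul continuous_const).mapsTo_connectedComponent 1
      (f := fun x ↦ g * x * g⁻¹) hn

theorem Subgroup.connectedComponentOfOne_le_of_isOpen {H : Subgroup G}
    (hH : IsOpen (H : Set G)) : connectedComponentOfOne G ≤ H :=
  IsClopen.connectedComponent_subset ⟨H.isClosed_of_isOpen hH, hH⟩ H.one_mem

theorem Subgroup.mem_connectedComponentOfOne_of_isOpen {H : Subgroup G}
    (hH : IsOpen (H : Set G)) {x : H} (hx : (x : G) ∈ connectedComponentOfOne G) :
    x ∈ connectedComponentOfOne H := by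
  have hsub : connectedComponent (1 : G) ⊆ connectedComponentIn H 1 :=
    isPreconnected_connectedComponent.subset_connectedComponentIn mem_connectedComponent
      (connectedComponentOfOne_le_of_isOpen hH)
  obtain ⟨y, hy, hyx⟩ := connectedComponentIn_eq_image H.one_mem ▸ hsub hx
  exact Subtype.val_injective hyx ▸ hy

instance QuotientGroup.totallyDisconnectedSpace_connectedComponentOfOne :
    TotallyDisconnectedSpace (G ⧸ connectedComponentOfOne G) := by
  set N := connectedComponentOfOne G
  have hfibers (y : G ⧸ N) : IsConnected ((QuotientGroup.mk : G → G ⧸ N) ⁻¹' {y}) := by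
    obtain ⟨g, rfl⟩ := QuotientGroup.mk_surjective y
    rw [← image_singleton, QuotientGroup.preimage_image_mk_eq_mul, singleton_mul]
    exact isConnected_connectedComponent.image _ (continuous_const_mul g).continuousOn
  rw [totallyDisconnectedSpace_iff_connectedComponent_one, ← QuotientGroup.mk_one,
    ← (QuotientGroup.isQuotientMap_mk N).isCoinducing.image_connectedComponent hfibers]
  change QuotientGroup.mk '' (N : Set G) = _
  ext y
  simp

end ConnectedComponent

section LocallyCompact

variable {G : Type*} [Group G] [TopologicalSpace G] [IsTopologicalGroup G]

open Subgroup

theorem exists_isOpen_isCompact_subgroup [LocallyCompactSpace G] [T2Space G]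
    [TotallyDisconnectedSpace G] :
    ∃ K : Subgroup G, IsOpen (K : Set G) ∧ IsCompact (K : Set G) := by
  obtain ⟨L, hL, hL1⟩ := exists_compact_mem_nhds (1 : G)
  obtain ⟨W, hW, hW1, hWL⟩ :=
    loc_compact_Haus_tot_disc_of_zero_dim.mem_nhds_iff.1 (interior_mem_nhds.2 hL1)
  have hWc : IsCompact W := hL.of_isClosed_subset hW.isClosed (hWL.trans interior_subset)
  obtain ⟨V, hV, hWV⟩ := compact_open_separated_mul_right hWc hW.isOpen subset_rfl
  set K := Subgroup.closure (V ∩ V⁻¹)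
  have hK : IsOpen (K : Set G) :=
    isOpen_of_mem_nhds _ (Filter.mem_of_superset (Filter.inter_mem hV (inv_mem_nhds_one G hV))
      subset_closure)
  have hKW : (K : Set G) ⊆ W :=
    closure_subset_of_mul_subset hW1 ((mul_subset_mul_left inter_subset_left).trans hWV)
      ((mul_subset_mul_left (by simp)).trans hWV)
  exact ⟨_, hK, hWc.of_isClosed_subset (isClosed_of_isOpen _ hK) hKW⟩

theorem exists_isOpen_subgroup_compactSpace_quotient_connectedComponentOfOne
    [LocallyCompactSpace G] :
    ∃ H : Subgroup G, IsOpen (H : Set G) ∧ CompactSpace (H ⧸ connectedComponentOfOne H) := by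
  set N := connectedComponentOfOne G
  have : IsClosed (N : Set G) := isClosed_connectedComponent
  obtain ⟨K, hKo, hKc⟩ := exists_isOpen_isCompact_subgroup (G := G ⧸ N)
  set H := K.comap (QuotientGroup.mk' N)
  have hH : IsOpen (H : Set G) := hKo.preimage QuotientGroup.continuous_mk
  have : LocallyCompactSpace H := hH.locallyCompactSpace
  set p : H → G ⧸ N := fun h ↦ ((h : G) : G ⧸ N)
  have hp : IsOpenMap p := QuotientGroup.isOpenMap_coe.comp hH.isOpenMap_subtype_val
  obtain ⟨C, hC, hKC⟩ := hKc.exists_isCompact_subset_image hp fun q hq ↦ by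
    obtain ⟨g, rfl⟩ := QuotientGroup.mk_surjective q
    exact ⟨⟨g, hq⟩, rfl⟩
  have hCH : (QuotientGroup.mk '' C : Set (H ⧸ connectedComponentOfOne H)) = univ := by
    refine eq_univ_of_forall fun q ↦ ?_
    obtain ⟨h, rfl⟩ := QuotientGroup.mk_surjective q
    obtain ⟨c, hcC, hch⟩ := hKC h.2
    exact ⟨c, hcC, QuotientGroup.eq.2 <|
      mem_connectedComponentOfOne_of_isOpen hH (QuotientGroup.eq.1 hch)⟩
  exact ⟨H, hH, ⟨hCH ▸ hC.image QuotientGroup.continuous_mk⟩⟩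

theorem sigmaCompactSpace_of_compactSpace_quotient_connectedComponentOfOne
    [WeaklyLocallyCompactSpace G] [CompactSpace (G ⧸ connectedComponentOfOne G)] :
    SigmaCompactSpace G := by
  obtain ⟨P, hPo, hPσ⟩ := exists_isOpen_isSigmaCompact_subgroup (G := G)
  have := finite_quotient_of_isOpen_of_le hPo (connectedComponentOfOne_le_of_isOpen hPo)
  exact P.sigmaCompactSpace_of_countable_quotient hPσ

end LocallyCompact

theorem sigmaCompact_tfae_general (G : Type*) [TopologicalSpace G] [Group G] [IsTopologicalGroup G]
    [LocallyCompactSpace G] :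
    List.TFAE
      [SigmaCompactSpace G,
       ∀ H : Subgroup G, IsOpen (H : Set G) → Countable (G ⧸ H),
       ∃ H : Subgroup G, IsOpen (H : Set G) ∧ Countable (G ⧸ H) ∧
         CompactSpace (↥H ⧸ Subgroup.connectedComponentOfOne ↥H)] := by
  tfae_have 1 → 2 := fun _ _ ↦ Subgroup.countable_quotient_of_isOpen
  tfae_have 2 → 3 := fun h ↦ by
    obtain ⟨H, hH, hHc⟩ :=
      exists_isOpen_subgroup_compactSpace_quotient_connectedComponentOfOne (G := G)
    exact ⟨H, hH, h H hH, hHc⟩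
  tfae_have 3 → 1 := by
    rintro ⟨H, hH, hHc, hHcompact⟩
    have : LocallyCompactSpace H := hH.locallyCompactSpace
    have hHσ : SigmaCompactSpace H :=
      sigmaCompactSpace_of_compactSpace_quotient_connectedComponentOfOne
    exact H.sigmaCompactSpace_of_countable_quotient (isSigmaCompact_iff_sigmaCompactSpace.2 hHσ)
  tfae_finish

/-- For a locally compact Hausdorff topological group `G`, the following are
equivalent: (1) `G` is σ-compact; (2) every open subgroup of `G` has countable index;
(3) `G` has an open subgroup of countable index which is almost connected (i.e. the quotient
of the subgroup by its identity component is compact). -/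
theorem sigmaCompact_tfae (G : Type*) [TopologicalSpace G] [Group G] [IsTopologicalGroup G]
    [T2Space G] [LocallyCompactSpace G] :
    List.TFAE
      [SigmaCompactSpace G,
       ∀ H : Subgroup G, IsOpen (H : Set G) → Countable (G ⧸ H),
       ∃ H : Subgroup G, IsOpen (H : Set G) ∧ Countable (G ⧸ H) ∧
         CompactSpace (↥H ⧸ Subgroup.connectedComponentOfOne ↥H)] :=
  sigmaCompact_tfae_general G
end

section
/- Let 𝒦 be a class of Hausdorff topological spaces closed under finite products and under passage to closed subspaces, let K be a topological group belonging to 𝒦, and let N be a normal (not necessarily closed) subgroup of K which is a 𝒦-analytic subset of K. Let H = K/N as an abstract group and π : K → H the quotient homomorphism. Let A, B ⊆ H be subsets such that π⁻¹(A) and π⁻¹(B) are 𝒦-analytic. Then the following subsets of K are 𝒦-analytic: (1) π⁻¹(AB); (2) π⁻¹({[a,b] : a ∈ A, b ∈ B}); (3) π⁻¹({h ∈ H : [h,y] ∈ A}) for every y ∈ H; (4) π⁻¹(Cen_H(X)) for every finite subset X ⊆ H, where Cen_H(X) is the centralizer of X in H. -/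
open Pointwise
open scoped commutatorElement

universe u

/-- A subset is `𝒦`-analytic if it is the image of a continuous map from a member of `𝒦`. -/
def KAnalytic (𝒦 : (X : Type u) → TopologicalSpace X → Prop) {X : Type u}
    [tX : TopologicalSpace X] (A : Set X) : Prop :=
  ∃ (Z : Type u) (tZ : TopologicalSpace Z), 𝒦 Z tZ ∧
    ∃ ψ : Z → X, @Continuous Z X tZ tX ψ ∧ Set.range ψ = A

/-- A class of Hausdorff spaces closed under finite products and closed subspaces. -/
structure IsSpaceClass (𝒦 : (X : Type u) → TopologicalSpace X → Prop) : Prop where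
  t2 : ∀ (X : Type u) [tX : TopologicalSpace X], 𝒦 X tX → T2Space X
  prod : ∀ (X Y : Type u) [tX : TopologicalSpace X] [tY : TopologicalSpace Y],
    𝒦 X tX → 𝒦 Y tY → 𝒦 (X × Y) inferInstance
  closed : ∀ (X : Type u) [tX : TopologicalSpace X] (A : Set X),
    𝒦 X tX → IsClosed A → 𝒦 A inferInstance

/-!
`𝒦`-analytic sets are stable under continuous images, finite products, continuous preimages
(into Hausdorff spaces, via the closed graph) and finite intersections, so it suffices to build
the four sets from `π⁻¹(A)`, `π⁻¹(B)` and `N` by these operations: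
`π⁻¹(AB) = π⁻¹(A) π⁻¹(B)`; the commutator set is the image under `π` of the commutators of
`π⁻¹(A)` and `π⁻¹(B)`, so its preimage is that set times `N`; `π⁻¹{h | [h,y] ∈ A}` is the
preimage of `π⁻¹(A)` under `x ↦ [x,ỹ]` for a lift `ỹ` of `y`; and the centralizer of `X` is
`⋂ y ∈ X, {h | [h,y] ∈ {1}}`, where `π⁻¹{1} = N`.
-/

open Set

namespace KAnalytic

variable {𝒦 : (X : Type u) → TopologicalSpace X → Prop} {X Y W : Type u}
  [tX : TopologicalSpace X] [TopologicalSpace Y] [TopologicalSpace W]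

theorem univ_of_mem (hX : 𝒦 X tX) : KAnalytic 𝒦 (univ : Set X) :=
  ⟨X, tX, hX, id, continuous_id, range_id⟩

theorem of_isClosed (h𝒦 : IsSpaceClass 𝒦) (hX : 𝒦 X tX) {C : Set X} (hC : IsClosed C) :
    KAnalytic 𝒦 C :=
  ⟨C, _, h𝒦.closed X C hX hC, Subtype.val, continuous_subtype_val, Subtype.range_val⟩

theorem image {S : Set X} (hS : KAnalytic 𝒦 S) {f : X → Y} (hf : Continuous f) :
    KAnalytic 𝒦 (f '' S) := by
  obtain ⟨Z, tZ, hZ, ψ, hψ, rfl⟩ := hS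
  exact ⟨Z, tZ, hZ, f ∘ ψ, hf.comp hψ, range_comp f ψ⟩

theorem prod (h𝒦 : IsSpaceClass 𝒦) {S : Set X} {T : Set Y} (hS : KAnalytic 𝒦 S)
    (hT : KAnalytic 𝒦 T) : KAnalytic 𝒦 (S ×ˢ T) := by
  obtain ⟨Z₁, t₁, hZ₁, ψ₁, hψ₁, rfl⟩ := hS
  obtain ⟨Z₂, t₂, hZ₂, ψ₂, hψ₂, rfl⟩ := hT
  exact ⟨Z₁ × Z₂, _, h𝒦.prod Z₁ Z₂ hZ₁ hZ₂, Prod.map ψ₁ ψ₂, hψ₁.prodMap hψ₂, range_prodMap⟩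

theorem image2 (h𝒦 : IsSpaceClass 𝒦) {S : Set X} {T : Set Y} (hS : KAnalytic 𝒦 S)
    (hT : KAnalytic 𝒦 T) {f : X → Y → W} (hf : Continuous (Function.uncurry f)) :
    KAnalytic 𝒦 (Set.image2 f S T) :=
  image_uncurry_prod f S T ▸ (hS.prod h𝒦 hT).image hf

theorem preimage (h𝒦 : IsSpaceClass 𝒦) (hX : 𝒦 X tX) [T2Space Y] {S : Set Y}
    (hS : KAnalytic 𝒦 S) {f : X → Y} (hf : Continuous f) : KAnalytic 𝒦 (f ⁻¹' S) := by
  obtain ⟨Z, tZ, hZ, ψ, hψ, rfl⟩ := hS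
  have hgraph : IsClosed {p : X × Z | f p.1 = ψ p.2} :=
    isClosed_eq (hf.comp continuous_fst) (hψ.comp continuous_snd)
  have hfst : f ⁻¹' range ψ = Prod.fst '' {p : X × Z | f p.1 = ψ p.2} := by
    ext x
    simp [eq_comm]
  exact hfst ▸ (of_isClosed h𝒦 (h𝒦.prod X Z hX hZ) hgraph).image continuous_fst

theorem inter (h𝒦 : IsSpaceClass 𝒦) [T2Space X] {S T : Set X} (hS : KAnalytic 𝒦 S)
    (hT : KAnalytic 𝒦 T) : KAnalytic 𝒦 (S ∩ T) := by
  obtain ⟨Z, tZ, hZ, ψ, hψ, rfl⟩ := hS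
  exact image_preimage_eq_range_inter ▸ (hT.preimage h𝒦 hZ hψ).image hψ

theorem biInter_of_finite (h𝒦 : IsSpaceClass 𝒦) (hX : 𝒦 X tX) {ι : Type*} {s : Set ι}
    (hs : s.Finite) {S : ι → Set X} (hS : ∀ i ∈ s, KAnalytic 𝒦 (S i)) :
    KAnalytic 𝒦 (⋂ i ∈ s, S i) := by
  have := h𝒦.t2 X hX
  induction s, hs using Set.Finite.induction_on with
  | empty => simpa using univ_of_mem hX
  | @insert i s _ _ ih =>
    rw [biInter_insert]
    exact (hS i (mem_insert i s)).inter h𝒦 (ih fun j hj ↦ hS j (mem_insert_of_mem i hj))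

end KAnalytic

theorem continuous_commutatorElement {G : Type*} [TopologicalSpace G] [Group G]
    [IsTopologicalGroup G] : Continuous fun p : G × G ↦ ⁅p.1, p.2⁆ := by
  simp only [commutatorElement_def]
  fun_prop

namespace MonoidHom

variable {G H : Type*} [Group G] [Group H] (f : G →* H)

theorem preimage_mul_of_surjective (hf : Function.Surjective f) (A B : Set H) :
    f ⁻¹' (A * B) = f ⁻¹' A * f ⁻¹' B := by
  refine subset_antisymm ?_ (preimage_mul_preimage_subset f)
  rintro x ⟨a, ha, b, hb, hab⟩
  obtain ⟨y, rfl⟩ := hf a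
  refine ⟨y, ha, y⁻¹ * x, ?_, mul_inv_cancel_left y x⟩
  simpa [← hab] using hb

theorem image_image2_commutatorElement_preimage (hf : Function.Surjective f) (A B : Set H) :
    f '' image2 (⁅·, ·⁆) (f ⁻¹' A) (f ⁻¹' B) = image2 (⁅·, ·⁆) A B := by
  rw [image_image2_distrib (map_commutatorElement f), image_preimage_eq A hf,
    image_preimage_eq B hf]

end MonoidHom

namespace QuotientGroup

variable {𝒦 : (X : Type u) → TopologicalSpace X → Prop} {K : Type u} [tK : TopologicalSpace K]
  [Group K] [IsTopologicalGroup K] {N : Subgroup K} [N.Normal]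

theorem kAnalytic_preimage_setOf_commutatorElement_mem (h𝒦 : IsSpaceClass 𝒦) (hK : 𝒦 K tK)
    {A : Set (K ⧸ N)} (hA : KAnalytic 𝒦 (mk ⁻¹' A)) (y : K ⧸ N) :
    KAnalytic 𝒦 (mk ⁻¹' {h : K ⧸ N | ⁅h, y⁆ ∈ A}) := by
  obtain ⟨y, rfl⟩ := mk_surjective y
  have := h𝒦.t2 K hK
  exact hA.preimage h𝒦 hK (continuous_commutatorElement.comp (.prodMk_left y))

end QuotientGroup

/-- Let `𝒦` be a class of Hausdorff spaces closed under finite products and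
closed subspaces, `K` a topological group in `𝒦` and `N ⊴ K` a normal subgroup which is a
`𝒦`-analytic subset of `K`. Let `π : K → H = K/N` be the abstract quotient homomorphism and
`A`, `B` subsets of `H` with `𝒦`-analytic preimages. Then the preimages of (1) the product
set `AB`, (2) the set of commutators `[a,b]` with `a ∈ A`, `b ∈ B`, (3) the set
`{h | [h,y] ∈ A}` for any `y ∈ H`, and (4) the centralizer of any finite subset of `H`,
are all `𝒦`-analytic. -/
theorem preimages_kAnalytic {𝒦 : (X : Type u) → TopologicalSpace X → Prop}
    (h𝒦 : IsSpaceClass 𝒦) {K : Type u} [tK : TopologicalSpace K] [Group K]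
    [IsTopologicalGroup K] (hK : 𝒦 K tK) (N : Subgroup K) [N.Normal]
    (hN : KAnalytic 𝒦 (N : Set K)) (A B : Set (K ⧸ N))
    (hA : KAnalytic 𝒦 (⇑(QuotientGroup.mk' N) ⁻¹' A))
    (hB : KAnalytic 𝒦 (⇑(QuotientGroup.mk' N) ⁻¹' B)) :
    KAnalytic 𝒦 (⇑(QuotientGroup.mk' N) ⁻¹' (A * B)) ∧
    KAnalytic 𝒦 (⇑(QuotientGroup.mk' N) ⁻¹' {x | ∃ a ∈ A, ∃ b ∈ B, x = ⁅a, b⁆}) ∧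
    (∀ y : K ⧸ N,
      KAnalytic 𝒦 (⇑(QuotientGroup.mk' N) ⁻¹' {h : K ⧸ N | ⁅h, y⁆ ∈ A})) ∧
    (∀ X : Set (K ⧸ N), X.Finite →
      KAnalytic 𝒦 (⇑(QuotientGroup.mk' N) ⁻¹' (Subgroup.centralizer X : Set (K ⧸ N)))) := by
  have hπ := QuotientGroup.mk'_surjective N
  have hcomm : {x | ∃ a ∈ A, ∃ b ∈ B, x = ⁅a, b⁆} = QuotientGroup.mk' N ''
      image2 (⁅·, ·⁆) (QuotientGroup.mk' N ⁻¹' A) (QuotientGroup.mk' N ⁻¹' B) := by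
    rw [(QuotientGroup.mk' N).image_image2_commutatorElement_preimage hπ]
    ext
    simp [eq_comm]
  have hcen (X : Set (K ⧸ N)) :
      (Subgroup.centralizer X : Set (K ⧸ N)) = ⋂ y ∈ X, {h | ⁅h, y⁆ ∈ ({1} : Set (K ⧸ N))} := by
    ext
    simp [Subgroup.mem_centralizer_iff_commutator_eq_one']
  have hone : KAnalytic 𝒦 (QuotientGroup.mk' N ⁻¹' {1}) := QuotientGroup.preimage_mk_one N ▸ hN
  refine ⟨?_, ?_, QuotientGroup.kAnalytic_preimage_setOf_commutatorElement_mem h𝒦 hK hA,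
    fun X hX ↦ ?_⟩
  · rw [(QuotientGroup.mk' N).preimage_mul_of_surjective hπ]
    exact hA.image2 h𝒦 hB continuous_mul
  · rw [hcomm, QuotientGroup.coe_mk', QuotientGroup.preimage_image_mk_eq_mul]
    exact (hA.image2 h𝒦 hB continuous_commutatorElement).image2 h𝒦 hN continuous_mul
  · rw [hcen, preimage_iInter₂]
    exact KAnalytic.biInter_of_finite h𝒦 hK hX fun y _ ↦
      QuotientGroup.kAnalytic_preimage_setOf_commutatorElement_mem h𝒦 hK hone y
end

section
/- Let 𝔤 be a finite-dimensional real Lie algebra and let Z₁ = [X₁,Y₁], …, Z_n = [X_n,Y_n] be n linearly independent commutators in 𝔤. Then there exists a real number r > 0 such that for all real numbers t₁, …, t_n with 0 < |t_i| ≤ r for each i, the n vectors exp(ad(t_i X_i))Y_i − Y_i (i = 1,…,n) are linearly independent. -/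
/-!
As `t → 0`, `(exp(ad(t X)) Y - Y) / t` tends to `[X, Y]`, and linear independence is an open
condition in a finite-dimensional space. Hence for all small nonzero `tᵢ` the difference quotients
`(exp(ad(tᵢ Xᵢ)) Yᵢ - Yᵢ) / tᵢ` are linearly independent, and so are their rescalings by `tᵢ ≠ 0`.
-/

open NormedSpace Topology Filter Function

section FiniteDimensional

variable {𝕜 L : Type*} [NontriviallyNormedField 𝕜] [CompleteSpace 𝕜] [AddCommGroup L]
  [Module 𝕜 L] [TopologicalSpace L] [IsTopologicalAddGroup L] [ContinuousSMul 𝕜 L] [T2Space L]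
  [FiniteDimensional 𝕜 L]

theorem LinearIndependent.eventually_of_finiteDimensional {ι : Type*} [Finite ι] {v : ι → L}
    (hv : LinearIndependent 𝕜 v) : ∀ᶠ w in 𝓝 v, LinearIndependent 𝕜 w := by
  let e : L ≃L[𝕜] (Fin (Module.finrank 𝕜 L) → 𝕜) :=
    (Module.finBasis 𝕜 L).equivFun.toContinuousLinearEquiv
  have he : Continuous fun w : ι → L => e ∘ w :=
    continuous_pi fun i => e.continuous.comp (continuous_apply i)
  have hev := (hv.map' e.toLinearMap (LinearEquiv.ker e.toLinearEquiv)).eventually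
  exact ((he.tendsto v).eventually hev).mono fun w hw => hw.of_comp e.toLinearMap

theorem exists_linearIndependent_sub_of_tendsto_slope {ι : Type*} [Fintype ι] {f : ι → 𝕜 → L}
    {w : ι → L} (hf : ∀ i, Tendsto (slope (f i) 0) (𝓝[≠] 0) (𝓝 (w i)))
    (hw : LinearIndependent 𝕜 w) :
    ∃ r > (0 : ℝ), ∀ t : ι → 𝕜, (∀ i, 0 < ‖t i‖ ∧ ‖t i‖ ≤ r) →
      LinearIndependent 𝕜 fun i => f i (t i) - f i 0 := by
  classical
  let g : ι → 𝕜 → L := fun i => update (slope (f i) 0) 0 (w i)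
  have hg : ContinuousAt (fun t : ι → 𝕜 => fun i => g i (t i)) 0 :=
    continuousAt_pi.2 fun i =>
      (continuousAt_update_same.2 (hf i)).comp_of_eq (continuous_apply i).continuousAt rfl
  have hg0 : (fun i => g i ((0 : ι → 𝕜) i)) = w := funext fun i => update_self ..
  obtain ⟨ε, hε, hball⟩ := Metric.eventually_nhds_iff.1
    (hg.eventually (hg0 ▸ hw.eventually_of_finiteDimensional))
  refine ⟨ε / 2, half_pos hε, fun t ht => ?_⟩
  have ht0 : ∀ i, t i ≠ 0 := fun i => norm_pos_iff.1 (ht i).1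
  have hgt : LinearIndependent 𝕜 fun i => g i (t i) :=
    hball ((dist_pi_lt_iff hε).2 fun i => by
      simpa using (ht i).2.trans_lt (half_lt_self hε))
  convert hgt.units_smul fun i => Units.mk0 (t i) (ht0 i) with i
  simpa [g, update_of_ne (ht0 i)] using (sub_smul_slope (f i) 0 (t i)).symm

end FiniteDimensional

section Exponential

variable {𝕂 : Type*} [RCLike 𝕂]

theorem hasSum_expSeries_apply {E : Type*} [NormedAddCommGroup E] [NormedSpace 𝕂 E]
    [CompleteSpace E] (B : E →L[𝕂] E) (v : E) :
    HasSum (fun k : ℕ => ((k.factorial : 𝕂))⁻¹ • (B ^ k) v) (exp B v) :=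
  (exp_series_hasSum_exp' (𝕂 := 𝕂) B).mapL (ContinuousLinearMap.apply 𝕂 E v)

theorem hasDerivAt_exp_smul_apply_zero {E : Type*} [NormedAddCommGroup E] [NormedSpace 𝕂 E]
    [CompleteSpace E] (B : E →L[𝕂] E) (v : E) :
    HasDerivAt (fun t : 𝕂 => exp (t • B) v) (B v) 0 := by
  simpa using (hasDerivAt_exp_smul_const B 0).clm_apply (hasDerivAt_const 0 v)

variable {L : Type*} [AddCommGroup L] [Module 𝕂 L] [TopologicalSpace L] [IsTopologicalAddGroup L]
  [ContinuousSMul 𝕂 L] [T2Space L] [FiniteDimensional 𝕂 L]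

/- `L` carries no norm, so the series is summed in coordinates, where it is the operator
exponential of the conjugate of `t • A`. -/
theorem tendsto_slope_tsum_expSeries_smul_apply (A : Module.End 𝕂 L) (y : L) :
    Tendsto (slope (fun t : 𝕂 => ∑' k : ℕ, ((k.factorial : 𝕂))⁻¹ • ((t • A) ^ k) y) 0)
      (𝓝[≠] 0) (𝓝 (A y)) := by
  let e : L ≃L[𝕂] (Fin (Module.finrank 𝕂 L) → 𝕂) :=
    (Module.finBasis 𝕂 L).equivFun.toContinuousLinearEquiv
  let B := LinearMap.toContinuousLinearMap (e.toLinearEquiv.conj A)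
  have hpow (t : 𝕂) (k : ℕ) (x : L) : ((t • B) ^ k) (e x) = e (((t • A) ^ k) x) := by
    have hsemiconj : Semiconj e (t • A) (t • B) := fun x => by simp [B, LinearEquiv.conj_apply]
    simpa [Module.End.coe_pow] using (hsemiconj.iterate_right k x).symm
  have hsum : (fun t : 𝕂 => ∑' k : ℕ, ((k.factorial : 𝕂))⁻¹ • ((t • A) ^ k) y) =
      fun t => e.symm (exp (t • B) (e y)) := by
    funext t
    refine (((hasSum_expSeries_apply (t • B) (e y)).mapL (e.symm : _ →L[𝕂] L)).congr_fun
      fun k => ?_).tsum_eq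
    simp [hpow]
  have hderiv := hasDerivAt_iff_tendsto_slope.1 (hasDerivAt_exp_smul_apply_zero B (e y))
  convert (e.symm.continuous.tendsto _).comp hderiv using 1
  · rw [hsum]
    funext s
    exact e.symm.toLinearMap.slope_comp _ 0 s
  · simp [B, LinearEquiv.conj_apply]

end Exponential

/-- Let `𝔤` be a finite-dimensional real Lie algebra (endowed with its
canonical Hausdorff vector space topology) and let `Z i = ⁅X i, Y i⁆`, `i = 1, …, n`, be
linearly independent commutators. Then there is `r > 0` such that for all `t₁, …, t_n` with
`0 < |t i| ≤ r`, the vectors `exp(ad(t i • X i))(Y i) - Y i` are linearly independent, where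
`exp(ad(Z)) = ∑ₖ (1/k!)·ad(Z)^k`. -/
theorem linearIndependent_expAd_sub {L : Type*} [LieRing L] [LieAlgebra ℝ L]
    [TopologicalSpace L] [IsTopologicalAddGroup L] [ContinuousSMul ℝ L] [T2Space L]
    [FiniteDimensional ℝ L] {n : ℕ} (X Y : Fin n → L)
    (h : LinearIndependent ℝ fun i => ⁅X i, Y i⁆) :
    ∃ r > (0 : ℝ), ∀ t : Fin n → ℝ, (∀ i, 0 < |t i| ∧ |t i| ≤ r) →
      LinearIndependent ℝ fun i =>
        (∑' k : ℕ, ((k.factorial : ℝ))⁻¹ • ((LieAlgebra.ad ℝ L (t i • X i)) ^ k) (Y i))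
          - Y i := by
  have hslope (i : Fin n) : Tendsto (slope (fun s : ℝ =>
      ∑' k : ℕ, ((k.factorial : ℝ))⁻¹ • ((LieAlgebra.ad ℝ L (s • X i)) ^ k) (Y i)) 0)
      (𝓝[≠] 0) (𝓝 ⁅X i, Y i⁆) := by
    simpa using tendsto_slope_tsum_expSeries_smul_apply (LieAlgebra.ad ℝ L (X i)) (Y i)
  have hzero (y : L) : ∑' k : ℕ, ((k.factorial : ℝ))⁻¹ • ((0 : Module.End ℝ L) ^ k) y = y := by
    rw [tsum_eq_single 0 fun k hk => by simp [zero_pow hk]]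
    simp
  obtain ⟨r, hr, hLI⟩ := exists_linearIndependent_sub_of_tendsto_slope hslope h
  refine ⟨r, hr, fun t ht => ?_⟩
  simpa [hzero] using hLI t (by simpa using ht)
end

section
/- Let G be a Lie group, let f : [0,1] → G be a continuous path, and put C = f([0,1]) and P = CC⁻¹. Then the following are equivalent: (1) C is spacious in G; (2) there exists a finite subset F ⊆ G with 1 ∈ F such that the subgroup of G generated by ⋃_{g∈F} gPg⁻¹ equals the identity component G° of G. -/
/-!
Put `P = CC⁻¹` and `hᵢ = g₁⋯gᵢ`. Then `g₁P⋯gᵣP = (h₁Ph₁⁻¹)⋯(hᵣPhᵣ⁻¹)·hᵣ`, so `C` is spacious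
exactly when some finite product of conjugates of `P` has nonempty interior. In that case the
subgroup generated by these conjugates is open, hence contains `G°`; it is contained in `G°`
because `P` is connected and contains `1`. Conversely, if the conjugates of the compact symmetric
set `P` by the elements of `F` generate the open subgroup `G°`, then `G°` is the countable union
of the compact products of such conjugates, and by Baire's theorem one of them has nonempty
interior.
-/

open scoped Manifold Pointwise

def Spacious {G : Type*} [Group G] [TopologicalSpace G] (C : Set G) : Prop :=
  ∃ (r : ℕ) (g : Fin (r + 1) → G),
    (interior (((List.finRange (r + 1)).map fun i => {g i} * (C * C⁻¹)).prod)).Nonempty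

section Conjugation

variable {G : Type*} [Group G]

theorem singleton_mul_eq_image_conj_mul (h : G) (P : Set G) :
    {h} * P = (fun p => h * p * h⁻¹) '' P * {h} := by
  rw [Set.mul_singleton, Set.singleton_mul, Set.image_image]
  simp

theorem inv_image_conj (g : G) (P : Set G) :
    ((fun p => g * p * g⁻¹) '' P)⁻¹ = (fun p => g * p * g⁻¹) '' P⁻¹ := by
  ext y
  constructor
  · rintro ⟨p, hp, hpy⟩
    exact ⟨p⁻¹, by simpa using hp, by rw [← inv_inv y, ← hpy]; group⟩
  · rintro ⟨p, hp, rfl⟩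
    exact ⟨p⁻¹, hp, by group⟩

theorem singleton_mul_prod_map_singleton_mul (P : Set G) (c : G) (l : List G) :
    {c} * (l.map fun a => {a} * P).prod =
      ((l.scanl (· * ·) c).tail.map fun h => (fun p => h * p * h⁻¹) '' P).prod
        * {c * l.prod} := by
  induction l generalizing c with
  | nil => simp
  | cons a t ih =>
    obtain ⟨s, hs⟩ : ∃ s, t.scanl (· * ·) (c * a) = c * a :: s := by
      cases t <;> simp [List.scanl_cons]
    have ih := ih (c * a)
    rw [hs, List.tail_cons] at ih
    calc {c} * ((a :: t).map fun a => {a} * P).prod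
        = {c * a} * P * (t.map fun a => {a} * P).prod := by
          simp only [List.map_cons, List.prod_cons, ← mul_assoc, Set.singleton_mul_singleton]
      _ = (fun p => c * a * p * (c * a)⁻¹) '' P * ({c * a} * (t.map fun a => {a} * P).prod) := by
          rw [singleton_mul_eq_image_conj_mul, mul_assoc]
      _ = _ := by
          rw [ih, List.scanl_cons, List.tail_cons, hs, List.map_cons, List.prod_cons,
            List.prod_cons, mul_assoc, mul_assoc]

theorem exists_tail_scanl_mul_eq (c : G) (b : List G) :
    ∃ l : List G, l.length = b.length ∧ (l.scanl (· * ·) c).tail = b := by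
  induction b generalizing c with
  | nil => exact ⟨[], rfl, rfl⟩
  | cons h b ih =>
    obtain ⟨l, hlen, hl⟩ := ih h
    refine ⟨(c⁻¹ * h) :: l, by simp [hlen], ?_⟩
    obtain ⟨s, hs⟩ : ∃ s, l.scanl (· * ·) h = h :: s := by
      cases l <;> simp [List.scanl_cons]
    rw [hs, List.tail_cons] at hl
    rw [List.scanl_cons, List.tail_cons, mul_inv_cancel_left, hs, hl]

theorem exists_list_mem_prod_of_mem_closure_iUnion_conj {P : Set G} (hP : P⁻¹ = P)
    {F : Finset G} {x : G} (hx : x ∈ Subgroup.closure (⋃ g ∈ F, (fun p => g * p * g⁻¹) '' P)) :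
    ∃ b : List F, x ∈ (b.map fun g : F => (fun p => (g : G) * p * (g : G)⁻¹) '' P).prod := by
  set T := ⋃ g ∈ F, (fun p => g * p * g⁻¹) '' P
  have hT : T⁻¹ = T := by simp_rw [T, Set.iUnion_inv, inv_image_conj, hP]
  rw [← Subgroup.mem_toSubmonoid, Subgroup.closure_toSubmonoid, hT, Set.union_self] at hx
  obtain ⟨l, hl, rfl⟩ := Submonoid.exists_list_of_mem_closure hx
  clear hx
  induction l with
  | nil => exact ⟨[], Set.mem_one.2 rfl⟩
  | cons y l ih =>
    obtain ⟨b, hb⟩ := ih fun z hz => hl z (List.mem_cons_of_mem _ hz)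
    obtain ⟨g, hg, p, hp, rfl⟩ : ∃ g ∈ F, ∃ p ∈ P, g * p * g⁻¹ = y := by
      simpa [T] using hl y List.mem_cons_self
    exact ⟨⟨g, hg⟩ :: b, Set.mul_mem_mul ⟨p, hp, rfl⟩ hb⟩

end Conjugation

theorem list_prod_subset_of_forall_subset {M : Type*} [Monoid M] {S : Submonoid M} :
    ∀ {L : List (Set M)}, (∀ s ∈ L, s ⊆ S) → L.prod ⊆ S
  | [], _ => by simp [S.one_mem]
  | s :: L, h => by
    rw [List.prod_cons, Set.mul_subset_iff]
    exact fun x hx y hy => S.mul_mem (h s List.mem_cons_self hx)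
      (list_prod_subset_of_forall_subset (fun t ht => h t (List.mem_cons_of_mem _ ht)) hy)

theorem isCompact_list_prod {M : Type*} [Monoid M] [TopologicalSpace M] [ContinuousMul M] :
    ∀ {L : List (Set M)}, (∀ s ∈ L, IsCompact s) → IsCompact L.prod
  | [], _ => by simp
  | s :: L, h => by
    rw [List.prod_cons]
    exact (h s List.mem_cons_self).mul
      (isCompact_list_prod fun t ht => h t (List.mem_cons_of_mem _ ht))

theorem exists_nonempty_interior_of_isOpen_subset_iUnion {X ι : Type*} [TopologicalSpace X]
    [BaireSpace X] [Countable ι] {U : Set X} (hU : IsOpen U) (hne : U.Nonempty)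
    {K : ι → Set X} (hK : ∀ i, IsClosed (K i)) (hcov : U ⊆ ⋃ i, K i) :
    ∃ i, (interior (K i)).Nonempty := by
  let K' : Option ι → Set X := fun o => o.elim Uᶜ K
  have hK' : ∀ o, IsClosed (K' o) := by
    rintro (_ | i)
    exacts [hU.isClosed_compl, hK i]
  have hcov' : ⋃ o, K' o = Set.univ := by
    refine Set.eq_univ_of_forall fun x => ?_
    by_cases hx : x ∈ U
    · obtain ⟨i, hi⟩ := Set.mem_iUnion.1 (hcov hx)
      exact Set.mem_iUnion.2 ⟨some i, hi⟩
    · exact Set.mem_iUnion.2 ⟨none, hx⟩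
  obtain ⟨x, hxU, hx⟩ := (dense_iUnion_interior_of_closed hK' hcov').inter_open_nonempty U hU hne
  obtain ⟨_ | i, hi⟩ := Set.mem_iUnion.1 hx
  · exact absurd hxU (interior_subset hi)
  · exact ⟨i, x, hi⟩

theorem spacious_iff_exists_list {G : Type*} [Group G] [TopologicalSpace G] {C : Set G} :
    Spacious C ↔
      ∃ l : List G, l ≠ [] ∧ (interior (l.map fun a => {a} * (C * C⁻¹)).prod).Nonempty := by
  constructor
  · rintro ⟨r, g, hg⟩
    refine ⟨List.ofFn g, by simp, ?_⟩
    rwa [List.ofFn_eq_map, List.map_map]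
  · rintro ⟨_ | ⟨a, t⟩, hl, hint⟩
    · exact absurd rfl hl
    refine ⟨t.length, (a :: t).get, ?_⟩
    rwa [← List.map_get_finRange (a :: t), List.map_map] at hint

section TopologicalGroup

variable {G : Type*} [Group G] [TopologicalSpace G] [IsTopologicalGroup G]

theorem interior_mul_singleton_nonempty_iff {s : Set G} {w : G} :
    (interior (s * {w})).Nonempty ↔ (interior s).Nonempty := by
  rw [Set.mul_singleton, ← Homeomorph.coe_mulRight, ← (Homeomorph.mulRight w).image_interior,
    Set.image_nonempty]

theorem Subgroup.isOpen_of_interior_nonempty (H : Subgroup G)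
    (h : (interior (H : Set G)).Nonempty) : IsOpen (H : Set G) :=
  let ⟨_, hx⟩ := h
  H.isOpen_of_mem_nhds (mem_interior_iff_mem_nhds.1 hx)

theorem Subgroup.connectedComponent_one_subset_of_isOpen (H : Subgroup G)
    (h : IsOpen (H : Set G)) : connectedComponent (1 : G) ⊆ H :=
  IsClopen.connectedComponent_subset ⟨H.isClosed_of_isOpen h, h⟩ H.one_mem

theorem closure_iUnion_image_conj_subset_connectedComponent {P : Set G} (hP : IsPreconnected P)
    (h1 : (1 : G) ∈ P) (F : Finset G) :
    (Subgroup.closure (⋃ g ∈ F, (fun p => g * p * g⁻¹) '' P) : Set G) ⊆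
      connectedComponent 1 :=
  (Subgroup.closure_le (Subgroup.connectedComponentOfOne G)).2 <| Set.iUnion₂_subset fun _ _ =>
    (hP.image _ (by fun_prop)).subset_connectedComponent ⟨1, h1, by simp⟩

theorem connectedComponent_one_subset_closure_of_interior_nonempty {P : Set G} {l : List G}
    (hl : (interior (l.map fun a => {a} * P).prod).Nonempty) {F : Finset G}
    (hF : ∀ h ∈ (l.scanl (· * ·) 1).tail, h ∈ F) :
    connectedComponent (1 : G) ⊆ Subgroup.closure (⋃ g ∈ F, (fun p => g * p * g⁻¹) '' P) := by
  set H := Subgroup.closure (⋃ g ∈ F, (fun p => g * p * g⁻¹) '' P)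
  have hconj : ((l.scanl (· * ·) 1).tail.map fun h => (fun p => h * p * h⁻¹) '' P).prod ⊆ H :=
    list_prod_subset_of_forall_subset (S := H.toSubmonoid) <| by
      simp only [List.forall_mem_map]
      exact fun h hh x hx => Subgroup.subset_closure (Set.mem_iUnion₂.2 ⟨h, hF h hh, hx⟩)
  rw [← one_mul (l.map _).prod, ← Set.singleton_one, singleton_mul_prod_map_singleton_mul,
    interior_mul_singleton_nonempty_iff] at hl
  exact H.connectedComponent_one_subset_of_isOpen
    (H.isOpen_of_interior_nonempty (hl.mono (interior_mono hconj)))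

theorem exists_list_interior_nonempty_of_closure_eq [BaireSpace G] [LocallyConnectedSpace G]
    [T2Space G] {P : Set G} (hPc : IsCompact P) (hPinv : P⁻¹ = P) (h1 : (1 : G) ∈ P)
    {F : Finset G}
    (hF : (Subgroup.closure (⋃ g ∈ F, (fun p => g * p * g⁻¹) '' P) : Set G) =
      connectedComponent 1) :
    ∃ l : List G, l ≠ [] ∧ (interior (l.map fun a => {a} * P).prod).Nonempty := by
  let K : List F → Set G := fun b =>
    (b.map fun g : F => (fun p => (g : G) * p * (g : G)⁻¹) '' P).prod
  have hK : ∀ b, IsClosed (K b) := fun b =>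
    (isCompact_list_prod fun s hs => by
      obtain ⟨g, -, rfl⟩ := List.mem_map.1 hs
      exact hPc.image (by fun_prop)).isClosed
  have hcov : connectedComponent (1 : G) ⊆ ⋃ b, K b := fun x hx =>
    Set.mem_iUnion.2 <|
      exists_list_mem_prod_of_mem_closure_iUnion_conj hPinv (by rwa [← SetLike.mem_coe, hF])
  obtain ⟨b, hb⟩ := exists_nonempty_interior_of_isOpen_subset_iUnion isOpen_connectedComponent
    ⟨1, mem_connectedComponent⟩ hK hcov
  -- the trivial conjugator `1` is prepended so that the list of translates is nonempty
  set b' : List G := 1 :: b.map (↑)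
  have hb' : (interior (b'.map fun h => (fun p => h * p * h⁻¹) '' P).prod).Nonempty := by
    refine hb.mono (interior_mono ?_)
    rw [List.map_cons, List.prod_cons, List.map_map]
    exact Set.subset_mul_right _
      (show (1 : G) ∈ (fun p => 1 * p * 1⁻¹) '' P from ⟨1, h1, by simp⟩)
  obtain ⟨l, hlen, hl⟩ := exists_tail_scanl_mul_eq 1 b'
  refine ⟨l, List.ne_nil_of_length_pos (by simp [hlen, b']), ?_⟩
  rwa [← hl, ← interior_mul_singleton_nonempty_iff (w := 1 * l.prod),
    ← singleton_mul_prod_map_singleton_mul, Set.singleton_one, one_mul] at hb'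

theorem spacious_iff_exists_finset_closure_eq [BaireSpace G] [LocallyConnectedSpace G]
    [T2Space G] {C : Set G} (hCc : IsCompact C) (hCconn : IsConnected C) :
    Spacious C ↔ ∃ F : Finset G, (1 : G) ∈ F ∧
      (Subgroup.closure (⋃ g ∈ F, (fun p => g * p * g⁻¹) '' (C * C⁻¹)) : Set G) =
        connectedComponent 1 := by
  classical
  have h1 : (1 : G) ∈ C * C⁻¹ := by simpa [div_eq_mul_inv] using hCconn.nonempty.one_mem_div
  have hP : IsPreconnected (C * C⁻¹) := by
    rw [← Set.image_mul_prod, ← Set.image_inv_eq_inv]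
    exact (hCconn.isPreconnected.prod (hCconn.isPreconnected.image _ (by fun_prop))).image _
      (by fun_prop)
  rw [spacious_iff_exists_list]
  constructor
  · rintro ⟨l, -, hl⟩
    refine ⟨insert 1 (l.scanl (· * ·) 1).tail.toFinset, Finset.mem_insert_self _ _, ?_⟩
    exact (closure_iUnion_image_conj_subset_connectedComponent hP h1 _).antisymm
      (connectedComponent_one_subset_closure_of_interior_nonempty hl fun h hh =>
        Finset.mem_insert_of_mem (List.mem_toFinset.2 hh))
  · rintro ⟨F, -, hF⟩
    exact exists_list_interior_nonempty_of_closure_eq (hCc.mul hCc.inv)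
      (by rw [mul_inv_rev, inv_inv]) h1 hF

end TopologicalGroup

theorem spacious_iff_generates_identityComponent_general {E G : Type*} [NormedAddCommGroup E]
    [NormedSpace ℝ E] [Group G] [TopologicalSpace G]
    [IsTopologicalGroup G] [LocallyCompactSpace G] [ChartedSpace E G]
    (f : Set.Icc (0 : ℝ) 1 → G) (hf : Continuous f) :
    Spacious (Set.range f) ↔
      ∃ F : Finset G, (1 : G) ∈ F ∧
        (Subgroup.closure
            (⋃ g ∈ F, (fun p => g * p * g⁻¹) '' (Set.range f * (Set.range f)⁻¹)) : Set G)
          = connectedComponent (1 : G) := by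
  have : T1Space G := ChartedSpace.t1Space E G
  have : LocallyConnectedSpace G := ChartedSpace.locallyConnectedSpace E G
  exact spacious_iff_exists_finset_closure_eq (isCompact_range hf) (isConnected_range hf)

/-- Let `G` be a Lie group, `f : [0,1] → G` a continuous path,
`C = f([0,1])` and `P = CC⁻¹`. Then `C` is spacious in `G` if and only if there is a finite
set `F ⊆ G` with `1 ∈ F` such that the subgroup generated by `⋃_{g ∈ F} gPg⁻¹` is the
identity component `G°`. -/
theorem spacious_iff_generates_identityComponent {E G : Type*} [NormedAddCommGroup E]
    [NormedSpace ℝ E] [FiniteDimensional ℝ E] [Group G] [TopologicalSpace G]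
    [IsTopologicalGroup G] [LocallyCompactSpace G] [ChartedSpace E G] [LieGroup 𝓘(ℝ, E) (⊤ : ℕ∞) G]
    (f : Set.Icc (0 : ℝ) 1 → G) (hf : Continuous f) :
    Spacious (Set.range f) ↔
      ∃ F : Finset G, (1 : G) ∈ F ∧
        (Subgroup.closure
            (⋃ g ∈ F, (fun p => g * p * g⁻¹) '' (Set.range f * (Set.range f)⁻¹)) : Set G)
          = connectedComponent (1 : G) :=
  spacious_iff_generates_identityComponent_general (E := E) f hf
end

section
/- Let 𝕜 be ℝ or ℂ, and let V be a nonzero finite-dimensional 𝕜-vector space. Let M be a closed subgroup of GL(V) (the group of 𝕜-linear automorphisms of V with its natural topology) such that every element of M has determinant 1, and let L be a closed subgroup of the group of nonzero scalar transformations {v ↦ va : a ∈ 𝕜, a ≠ 0} ⊆ GL(V). Then the product set ML = {ml : m ∈ M, l ∈ L} is a closed subgroup of GL(V). -/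
open scoped Pointwise
open Filter Topology

/-- Let `𝕜` be `ℝ` or `ℂ` and `V` a nonzero finite-dimensional
`𝕜`-vector space. Let `M` be a closed subgroup of `GL(V)` all of whose elements have
determinant `1`, and let `L` be a closed subgroup of the group of nonzero scalar
transformations. Then the product set `ML` is a closed subgroup of `GL(V)`. -/
theorem product_with_scalars_closed {𝕜 V : Type*} [RCLike 𝕜] [NormedAddCommGroup V]
    [NormedSpace 𝕜 V] [FiniteDimensional 𝕜 V] [Nontrivial V]
    (M L : Subgroup (V →L[𝕜] V)ˣ)
    (hMclosed : IsClosed (M : Set (V →L[𝕜] V)ˣ))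
    (hMdet : ∀ m ∈ M, LinearMap.det (((m : (V →L[𝕜] V)ˣ) : V →L[𝕜] V) : V →ₗ[𝕜] V) = 1)
    (hLscalar : ∀ l ∈ L, ∃ a : 𝕜,
      (((l : (V →L[𝕜] V)ˣ) : V →L[𝕜] V) : V →ₗ[𝕜] V) = a • LinearMap.id)
    (hLclosed : IsClosed (L : Set (V →L[𝕜] V)ˣ)) :
    ∃ P : Subgroup (V →L[𝕜] V)ˣ,
      (P : Set (V →L[𝕜] V)ˣ) = (M : Set (V →L[𝕜] V)ˣ) * (L : Set (V →L[𝕜] V)ˣ) ∧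
      IsClosed (P : Set (V →L[𝕜] V)ˣ) := by
  classical
  -- elements of `L` are central
  have hcomm : ∀ l ∈ L, ∀ g : (V →L[𝕜] V)ˣ, g * l = l * g := by
    intro l hl g
    obtain ⟨a, ha⟩ := hLscalar l hl
    have hval : ∀ v : V, (l : V →L[𝕜] V) v = a • v := fun v => by
      have := LinearMap.congr_fun ha v
      simpa using this
    refine Units.ext (ContinuousLinearMap.ext fun v => ?_)
    simp [Units.val_mul, ContinuousLinearMap.mul_apply, hval, map_smul]
  haveI hN : L.Normal := by
    refine ⟨fun l hl g => ?_⟩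
    rw [hcomm l hl g]
    simpa [mul_assoc] using hl
  refine ⟨M ⊔ L, Subgroup.mul_normal M L, ?_⟩
  rw [Subgroup.mul_normal M L]
  -- closedness
  haveI : CompleteSpace V := FiniteDimensional.complete 𝕜 V
  have hoe : IsOpenEmbedding (Units.val : (V →L[𝕜] V)ˣ → (V →L[𝕜] V)) :=
    Units.isOpenEmbedding_val
  haveI : TopologicalSpace.MetrizableSpace (V →L[𝕜] V)ˣ :=
    hoe.toIsEmbedding.metrizableSpace
  apply IsSeqClosed.isClosed
  intro u x hmem hux
  have hdecomp : ∀ n, ∃ m ∈ M, ∃ l ∈ L, m * l = u n := fun n => Set.mem_mul.mp (hmem n)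
  choose m hm l hl hml using hdecomp
  choose a ha using fun n => hLscalar (l n) (hl n)
  set d := Module.finrank 𝕜 V with hdd
  have hd : 0 < d := Module.finrank_pos
  have hdet_u : ∀ n, LinearMap.det ((((u n : (V →L[𝕜] V)ˣ) : V →L[𝕜] V)) : V →ₗ[𝕜] V)
      = a n ^ d := by
    intro n
    rw [← hml n]
    have h1 : ((((m n * l n : (V →L[𝕜] V)ˣ) : V →L[𝕜] V)) : V →ₗ[𝕜] V)
        = ((((m n : (V →L[𝕜] V)ˣ) : V →L[𝕜] V)) : V →ₗ[𝕜] V).comp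
          ((((l n : (V →L[𝕜] V)ˣ) : V →L[𝕜] V)) : V →ₗ[𝕜] V) := rfl
    rw [h1, LinearMap.det_comp, hMdet (m n) (hm n), one_mul, ha n,
      LinearMap.det_smul, LinearMap.det_id, mul_one]
  have hdet_cont : Filter.Tendsto
      (fun n => LinearMap.det ((((u n : (V →L[𝕜] V)ˣ) : V →L[𝕜] V)) : V →ₗ[𝕜] V)) atTop
      (𝓝 (LinearMap.det (((x : (V →L[𝕜] V)ˣ) : V →L[𝕜] V) : V →ₗ[𝕜] V))) :=
    ((ContinuousLinearMap.continuous_det.comp Units.continuous_val).tendsto x).comp hux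
  set D := LinearMap.det (((x : (V →L[𝕜] V)ˣ) : V →L[𝕜] V) : V →ₗ[𝕜] V) with hD
  have hApow : Filter.Tendsto (fun n => a n ^ d) atTop (𝓝 D) := by
    simpa only [hdet_u] using hdet_cont
  have hDne : D ≠ 0 := by
    have h1 : (((x : (V →L[𝕜] V)ˣ) : V →L[𝕜] V) : V →ₗ[𝕜] V).comp
        (((x⁻¹ : (V →L[𝕜] V)ˣ) : V →L[𝕜] V) : V →ₗ[𝕜] V) = LinearMap.id := by
      ext v
      simp [← ContinuousLinearMap.mul_apply, ← Units.val_mul]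
    have := congrArg LinearMap.det h1
    rw [LinearMap.det_comp, LinearMap.det_id] at this
    exact left_ne_zero_of_mul_eq_one this
  -- boundedness of the scalars
  obtain ⟨C, hC⟩ := (hApow.norm.bddAbove_range)
  simp only [mem_upperBounds, Set.forall_mem_range, norm_pow] at hC
  have hbd : ∀ n, a n ∈ Metric.closedBall (0 : 𝕜) (max 1 C) := by
    intro n
    simp only [Metric.mem_closedBall, dist_zero_right]
    rcases le_or_gt ‖a n‖ 1 with h | h
    · exact h.trans (le_max_left _ _)
    · exact (le_self_pow₀ h.le hd.ne').trans ((hC n).trans (le_max_right _ _))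
  obtain ⟨b, -, φ, hφ, hab⟩ :=
    tendsto_subseq_of_bounded Metric.isBounded_closedBall hbd
  have hbpow : Filter.Tendsto (fun n => a (φ n) ^ d) atTop (𝓝 (b ^ d)) :=
    (continuous_pow d).continuousAt.tendsto.comp hab
  have hbD : b ^ d = D :=
    tendsto_nhds_unique hbpow (hApow.comp hφ.tendsto_atTop)
  have hbne : b ≠ 0 := by
    intro h
    rw [h, zero_pow hd.ne'] at hbD
    exact hDne hbD.symm
  -- the limiting scalar unit
  set lu : (V →L[𝕜] V)ˣ :=
    Units.map (algebraMap 𝕜 (V →L[𝕜] V)).toMonoidHom (Units.mk0 b hbne) with hlu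
  have hlval : ∀ n, ((l n : (V →L[𝕜] V)ˣ) : V →L[𝕜] V) = algebraMap 𝕜 (V →L[𝕜] V) (a n) := by
    intro n
    apply ContinuousLinearMap.coe_injective
    rw [ha n]
    ext v
    simp [Algebra.algebraMap_eq_smul_one]
  have hltend : Filter.Tendsto (fun n => l (φ n)) atTop (𝓝 lu) := by
    rw [hoe.toIsEmbedding.toIsInducing.tendsto_nhds_iff]
    have : Filter.Tendsto (fun n => algebraMap 𝕜 (V →L[𝕜] V) (a (φ n))) atTop
        (𝓝 (algebraMap 𝕜 (V →L[𝕜] V) b)) :=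
      ((continuous_algebraMap 𝕜 (V →L[𝕜] V)).tendsto b).comp hab
    simpa [Function.comp_def, hlval, hlu] using this
  have hluL : lu ∈ L := hLclosed.mem_of_tendsto hltend
    (Filter.Eventually.of_forall fun n => hl (φ n))
  have hmtend : Filter.Tendsto (fun n => m (φ n)) atTop (𝓝 (x * lu⁻¹)) := by
    have heq : ∀ n, m (φ n) = u (φ n) * (l (φ n))⁻¹ := fun n =>
      eq_mul_inv_of_mul_eq (hml (φ n))
    simp only [heq]
    exact (hux.comp hφ.tendsto_atTop).mul hltend.inv
  have hmM : x * lu⁻¹ ∈ M := hMclosed.mem_of_tendsto hmtend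
    (Filter.Eventually.of_forall fun n => hm (φ n))
  exact Set.mem_mul.mpr ⟨x * lu⁻¹, hmM, lu, hluL, by simp [mul_assoc]⟩
end
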